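/- arXiv:1903.08318 — 5 statements merged into one kernel-verified Lean document; each statement's English description precedes it below -/
import Mathlib

section
/- (Nemhauser–Wolsey submodular inequality) If f : 2^V → ℝ is a nondecreasing submodular set function, then for all S, X ⊆ V: f(X) ≤ f(S) + Σ_{j ∈ V \ S} (f(S ∪ {j}) − f(S)) · 𝟙[j ∈ X]. -/
/-- Nemhauser–Wolsey submodular inequality. -/
theorem submodular_inequality {V : Type*} [Fintype V] [DecidableEq V]
    (f : Finset V → ℝ)
    (hmono : ∀ X Y : Finset V, X ⊆ Y → f X ≤ f Y)
    (hsub : ∀ X Y : Finset V, f (X ∪ Y) + f (X ∩ Y) ≤ f X + f Y) :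
    ∀ S X : Finset V, f X ≤ f S + ∑ j ∈ X \ S, (f (insert j S) - f S) := by
  intro S X
  have key : ∀ T : Finset V, f (S ∪ T) ≤ f S + ∑ j ∈ T, (f (insert j S) - f S) := by
    intro T
    induction T using Finset.induction_on with
    | empty => simp
    | @insert a T ha ih =>
      have h1 := hsub (S ∪ T) (insert a S)
      have h2 : S ⊆ (S ∪ T) ∩ insert a S := by
        intro x hx
        simp [Finset.mem_inter, Finset.mem_union, hx]
      have h3 := hmono _ _ h2
      have h4 : S ∪ insert a T = (S ∪ T) ∪ insert a S := by
        ext x; simp [Finset.mem_union, Finset.mem_insert]; tauto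
      rw [Finset.sum_insert ha]
      have := hmono S (S ∪ T) Finset.subset_union_left
      rw [h4]
      linarith
  calc f X ≤ f (S ∪ (X \ S)) := hmono _ _ (by intro x hx; simp [Finset.mem_union, Finset.mem_sdiff]; tauto)
    _ ≤ _ := key _
end

section
/- (Validity of the relaxed lifted cut via exact lifting) Let g : 2^V → ℝ be nondecreasing, S ⊆ V, and j_1,…,j_r an enumeration of V \ S. Define exact lifting coefficients recursively: δ_t := −g(S) + max over X ⊆ V with j_t ∈ X and j_i ∉ X for i > t of (g(X) − Σ_{i < t : j_i ∈ X} δ_i). Then for every X ⊆ V: g(X) ≤ g(S) + Σ_{t : j_t ∈ X} δ_t. -/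
/-- validity of the lifted cut with exact lifting coefficients δ_t, where δ_t is
characterized by the recursive lifting problem (δ_t + g S is the greatest value of
g(X) − Σ_{i < t, j_i ∈ X} δ_i over X with j_t ∈ X and j_i ∉ X for i > t). -/
theorem exact_lifting_cut_valid {V : Type*} [Fintype V] [DecidableEq V]
    (g : Finset V → ℝ) (hmono : ∀ X Y : Finset V, X ⊆ Y → g X ≤ g Y)
    (S : Finset V) (r : ℕ) (j : Fin r → V)
    (hinj : Function.Injective j) (hjS : ∀ t, j t ∉ S)
    (hcover : ∀ v : V, v ∉ S → ∃ t, j t = v)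
    (δ : Fin r → ℝ)
    (hδ : ∀ t : Fin r, IsGreatest
      {v : ℝ | ∃ X : Finset V, j t ∈ X ∧ (∀ i : Fin r, t < i → j i ∉ X) ∧
        v = g X - ∑ i ∈ Finset.univ.filter (fun i : Fin r => i < t ∧ j i ∈ X), δ i}
      (δ t + g S)) :
    ∀ X : Finset V, g X ≤ g S + ∑ t ∈ Finset.univ.filter (fun t => j t ∈ X), δ t := by
  intro X
  set T := Finset.univ.filter (fun t : Fin r => j t ∈ X) with hT
  by_cases hne : T.Nonempty
  · set t := T.max' hne with htdef
    have htT : t ∈ T := T.max'_mem hne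
    have hjt : j t ∈ X := (Finset.mem_filter.mp htT).2
    have hgt : ∀ i : Fin r, t < i → j i ∉ X := by
      intro i hi hji
      exact absurd (T.le_max' i (Finset.mem_filter.mpr ⟨Finset.mem_univ _, hji⟩))
        (not_le.mpr hi)
    have hub : g X - ∑ i ∈ Finset.univ.filter (fun i : Fin r => i < t ∧ j i ∈ X), δ i
        ≤ δ t + g S := (hδ t).2 ⟨X, hjt, hgt, rfl⟩
    have hsplit : T = insert t (Finset.univ.filter (fun i : Fin r => i < t ∧ j i ∈ X)) := by
      ext i
      simp only [hT, Finset.mem_filter, Finset.mem_univ, true_and, Finset.mem_insert]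
      constructor
      · intro hi
        rcases lt_trichotomy i t with h | h | h
        · exact Or.inr ⟨h, hi⟩
        · exact Or.inl h
        · exact absurd hi (hgt i h)
      · rintro (rfl | ⟨_, hi⟩)
        · exact hjt
        · exact hi
    have htnot : t ∉ Finset.univ.filter (fun i : Fin r => i < t ∧ j i ∈ X) := by
      simp
    rw [hsplit, Finset.sum_insert htnot]
    linarith
  · have hXS : X ⊆ S := by
      intro x hx
      by_contra hxS
      obtain ⟨i, rfl⟩ := hcover x hxS
      exact hne ⟨i, Finset.mem_filter.mpr ⟨Finset.mem_univ _, hx⟩⟩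
    have hTe : T = ∅ := Finset.not_nonempty_iff_eq_empty.mp hne
    rw [hTe, Finset.sum_empty]
    simpa using hmono X S hXS
end

section
/- (Exact lifting coefficients are nonnegative and dominated by the relaxed coefficients) With g : 2^V → ℝ nondecreasing, S ⊆ V, enumeration j_1,…,j_r of V \ S, and exact lifting coefficients δ_t defined recursively as δ_t := −g(S) + max over X ⊆ V with j_t ∈ X, j_i ∉ X for all i > t of (g(X) − Σ_{i < t : j_i ∈ X} δ_i): each δ_t ≥ 0, and δ_t ≤ g(S ∪ {j_1,…,j_t}) − g(S) =: δ̄_t. -/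
/-- the exact lifting coefficients are nonnegative and dominated by the relaxed
coefficients δ̄_t = g(S ∪ {j_1,…,j_t}) − g(S). -/
theorem exact_lifting_coeffs_bounds {V : Type*} [Fintype V] [DecidableEq V]
    (g : Finset V → ℝ) (hmono : ∀ X Y : Finset V, X ⊆ Y → g X ≤ g Y)
    (S : Finset V) (r : ℕ) (j : Fin r → V)
    (hinj : Function.Injective j) (hjS : ∀ t, j t ∉ S)
    (hcover : ∀ v : V, v ∉ S → ∃ t, j t = v)
    (δ : Fin r → ℝ)
    (hδ : ∀ t : Fin r, IsGreatest
      {v : ℝ | ∃ X : Finset V, j t ∈ X ∧ (∀ i : Fin r, t < i → j i ∉ X) ∧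
        v = g X - ∑ i ∈ Finset.univ.filter (fun i : Fin r => i < t ∧ j i ∈ X), δ i}
      (δ t + g S)) :
    ∀ t : Fin r, 0 ≤ δ t ∧
      δ t ≤ g (S ∪ (Finset.univ.filter (fun i : Fin r => i ≤ t)).image j) - g S := by
  have hpos : ∀ t : Fin r, 0 ≤ δ t := by
    intro t
    have hmem : (g (insert (j t) S) -
        ∑ i ∈ Finset.univ.filter (fun i : Fin r => i < t ∧ j i ∈ insert (j t) S), δ i) ∈
        {v : ℝ | ∃ X : Finset V, j t ∈ X ∧ (∀ i : Fin r, t < i → j i ∉ X) ∧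
          v = g X - ∑ i ∈ Finset.univ.filter (fun i : Fin r => i < t ∧ j i ∈ X), δ i} := by
      refine ⟨insert (j t) S, Finset.mem_insert_self _ _, ?_, rfl⟩
      intro i hi hmem
      rcases Finset.mem_insert.mp hmem with h | h
      · exact absurd (hinj h) (Fin.ne_of_gt hi)
      · exact hjS i h
    have hle := (hδ t).2 hmem
    have hsum : ∑ i ∈ Finset.univ.filter (fun i : Fin r => i < t ∧ j i ∈ insert (j t) S), δ i
        = 0 := by
      apply Finset.sum_eq_zero
      intro i hi
      simp only [Finset.mem_filter, Finset.mem_insert] at hi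
      rcases hi.2.2 with h | h
      · exact absurd (hinj h) (Fin.ne_of_lt hi.2.1)
      · exact absurd h (hjS i)
    rw [hsum, sub_zero] at hle
    have hSg : g S ≤ g (insert (j t) S) := hmono _ _ (Finset.subset_insert _ _)
    linarith
  intro t
  refine ⟨hpos t, ?_⟩
  obtain ⟨X, hjt, hgt, heq⟩ := (hδ t).1
  have hsum : 0 ≤ ∑ i ∈ Finset.univ.filter (fun i : Fin r => i < t ∧ j i ∈ X), δ i :=
    Finset.sum_nonneg fun i _ => hpos i
  have hsub : X ⊆ S ∪ (Finset.univ.filter (fun i : Fin r => i ≤ t)).image j := by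
    intro v hv
    by_cases hvS : v ∈ S
    · exact Finset.mem_union.mpr (Or.inl hvS)
    · obtain ⟨i, hi⟩ := hcover v hvS
      have hit : i ≤ t := by
        by_contra h
        exact hgt i (lt_of_not_ge h) (hi ▸ hv)
      exact Finset.mem_union.mpr (Or.inr (Finset.mem_image.mpr
        ⟨i, Finset.mem_filter.mpr ⟨Finset.mem_univ _, hit⟩, hi⟩))
  have := hmono _ _ hsub
  linarith [heq]
end

section
/- (Validity of the relaxed lifted inequality) Let g : 2^V → ℝ be nondecreasing, S ⊆ V, and j_1,…,j_r an enumeration of V \ S. Define δ̄_t := g(S ∪ {j_1,…,j_t}) − g(S). Then for every X ⊆ V: g(X) ≤ g(S) + Σ_{t : j_t ∈ X} δ̄_t. -/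
/-!
Every element of `X` outside `S` is some `j t` with `t` in `T = {t | j t ∈ X}`, so `X` lies in the
prefix `S ∪ {j_1, …, j_{t₀}}` for `t₀ = max T`. By monotonicity `g X` is at most `g S + δ̄_{t₀}`, and
`δ̄_{t₀}` is one of the nonnegative terms of the sum. If `T` is empty, `X ⊆ S`.
-/

open Finset

section

variable {ι V : Type*}

theorem subset_union_image_filter_mem [Fintype ι] [DecidableEq V] {S X : Finset V} {j : ι → V}
    (hcover : ∀ v, v ∉ S → ∃ t, j t = v) :
    X ⊆ S ∪ (univ.filter fun t => j t ∈ X).image j := by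
  intro v hv
  by_cases hvS : v ∈ S
  · exact mem_union_left _ hvS
  · obtain ⟨t, rfl⟩ := hcover v hvS
    exact mem_union_right _ (mem_image_of_mem j (by simpa using hv))

theorem le_add_sum_sub_of_mem {T : Finset ι} {f : ι → ℝ} {c : ℝ} (hf : ∀ t ∈ T, c ≤ f t)
    {t₀ : ι} (ht₀ : t₀ ∈ T) : f t₀ ≤ c + ∑ t ∈ T, (f t - c) := by
  have := single_le_sum (f := fun t => f t - c) (fun t ht => sub_nonneg.2 (hf t ht)) ht₀
  linarith

end

theorem relaxed_lifted_cut_valid_general {V : Type*} [DecidableEq V]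
    (g : Finset V → ℝ) (hmono : ∀ X Y : Finset V, X ⊆ Y → g X ≤ g Y)
    (S : Finset V) (r : ℕ) (j : Fin r → V)
    (hcover : ∀ v : V, v ∉ S → ∃ t, j t = v) :
    ∀ X : Finset V,
      g X ≤ g S + ∑ t ∈ Finset.univ.filter (fun t => j t ∈ X),
        (g (S ∪ (Finset.univ.filter (fun i : Fin r => i ≤ t)).image j) - g S) := by
  intro X
  have hg : Monotone g := hmono
  set T := univ.filter fun t => j t ∈ X
  have hX : X ⊆ S ∪ T.image j := subset_union_image_filter_mem hcover
  rcases T.eq_empty_or_nonempty with hT | hT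
  · have hXS : g X ≤ g S := hg (by simpa [hT] using hX)
    simpa [hT] using hXS
  · have hprefix : T ⊆ univ.filter (· ≤ T.max' hT) := fun t ht => by simpa using T.le_max' t ht
    refine (hg ?_).trans (le_add_sum_sub_of_mem (fun t _ => hg subset_union_left) (T.max'_mem hT))
    exact hX.trans (union_subset_union_right (image_subset_image hprefix))

/-- validity of the relaxed lifted inequality
g(X) ≤ g(S) + Σ_{t : j_t ∈ X} (g(S ∪ {j_1,…,j_t}) − g(S)). -/
theorem relaxed_lifted_cut_valid {V : Type*} [Fintype V] [DecidableEq V]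
    (g : Finset V → ℝ) (hmono : ∀ X Y : Finset V, X ⊆ Y → g X ≤ g Y)
    (S : Finset V) (r : ℕ) (j : Fin r → V)
    (hinj : Function.Injective j) (hjS : ∀ t, j t ∉ S)
    (hcover : ∀ v : V, v ∉ S → ∃ t, j t = v) :
    ∀ X : Finset V,
      g X ≤ g S + ∑ t ∈ Finset.univ.filter (fun t => j t ∈ X),
        (g (S ∪ (Finset.univ.filter (fun i : Fin r => i ≤ t)).image j) - g S) :=
  relaxed_lifted_cut_valid_general g hmono S r j hcover
end

section
/- (CVaR closed form for integer-valued random variables) Let Z be a random variable taking values in {0,1,…,m}, let α ∈ (0,1], and let v := min{j ∈ ℤ, j ≥ 0 : P(Z ≤ j) ≥ α} (which exists). Then CVaR_α(Z) = v·(1 − (1/α)·P(Z ≤ v−1)) + (1/α)·Σ_{j=0}^{v−1} j·P(Z = j), where CVaR_α(Z) = sup_η (η − (1/α)·E[max(η − Z, 0)]). -/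
/-- closed form of CVaR for an integer-valued random variable, where
v = min{j ≥ 0 : P(Z ≤ j) ≥ α}. -/
theorem cvar_integer_closed_form {Ω : Type*} [Fintype Ω]
    (p : Ω → ℝ) (hp : ∀ ω, 0 < p ω) (hsum : ∑ ω, p ω = 1)
    (m : ℕ) (Z : Ω → ℕ) (hZ : ∀ ω, Z ω ≤ m)
    (α : ℝ) (hα : 0 < α) (hα1 : α ≤ 1)
    (v : ℕ)
    (hv : α ≤ ∑ ω ∈ Finset.univ.filter (fun ω => Z ω ≤ v), p ω)
    (hvmin : ∀ u : ℕ, u < v → ∑ ω ∈ Finset.univ.filter (fun ω => Z ω ≤ u), p ω < α) :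
    (⨆ η : ℝ, η - (1 / α) * ∑ ω, p ω * max (η - (Z ω : ℝ)) 0) =
      (v : ℝ) * (1 - (1 / α) * ∑ ω ∈ Finset.univ.filter (fun ω => Z ω < v), p ω) +
        (1 / α) * ∑ k ∈ Finset.range v,
          (k : ℝ) * ∑ ω ∈ Finset.univ.filter (fun ω => Z ω = k), p ω := by
  classical
  have hαpos : (0:ℝ) < 1/α := by positivity
  set F : ℝ → ℝ := fun η => η - (1 / α) * ∑ ω, p ω * max (η - (Z ω : ℝ)) 0 with hF
  set Pv : ℝ := ∑ ω ∈ Finset.univ.filter (fun ω => Z ω < v), p ω with hPv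
  set Qv : ℝ := ∑ ω ∈ Finset.univ.filter (fun ω => Z ω ≤ v), p ω with hQv
  set Sv : ℝ := ∑ ω, p ω * max ((v:ℝ) - (Z ω : ℝ)) 0 with hSv
  have hPv_lt : Pv < α := by
    rcases Nat.eq_zero_or_pos v with h0 | h0
    · have he : Finset.univ.filter (fun ω => Z ω < v) = ∅ := by
        apply Finset.filter_false_of_mem; intro ω _; omega
      simp [hPv, he, hα]
    · have h1 := hvmin (v-1) (by omega)
      have heq : (Finset.univ.filter fun ω => Z ω ≤ v-1)
          = Finset.univ.filter (fun ω => Z ω < v) := by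
        apply Finset.filter_congr; intro ω _; omega
      rw [heq] at h1; exact h1
  -- the maximizer bound
  have hle : ∀ η : ℝ, F η ≤ F (v:ℝ) := by
    intro η
    rcases le_total η (v:ℝ) with hcase | hcase
    · -- η ≤ v, use slope with Pv
      have key : Sv + (η - v) * Pv ≤ ∑ ω, p ω * max (η - (Z ω : ℝ)) 0 := by
        have hind : (η - v) * Pv
            = ∑ ω, (if Z ω < v then (η - v) * p ω else 0) := by
          rw [hPv, Finset.mul_sum, Finset.sum_filter]
        rw [hSv, hind, ← Finset.sum_add_distrib]
        apply Finset.sum_le_sum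
        intro ω _
        by_cases hz : Z ω < v
        · have hzv : (Z ω : ℝ) ≤ (v:ℝ) := by exact_mod_cast hz.le
          have h1 : max ((v:ℝ) - Z ω) 0 = (v:ℝ) - Z ω := max_eq_left (by linarith)
          have h2 : η - (Z ω : ℝ) ≤ max (η - Z ω) 0 := le_max_left _ _
          have hp' := (hp ω).le
          simp only [hz, if_true, h1]
          nlinarith [mul_le_mul_of_nonneg_left h2 hp']
        · have hzv : (v:ℝ) ≤ (Z ω : ℝ) := by exact_mod_cast (Nat.le_of_not_lt hz)
          have h1 : max ((v:ℝ) - Z ω) 0 = 0 := max_eq_right (by linarith)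
          have h2 : (0:ℝ) ≤ p ω * max (η - Z ω) 0 :=
            mul_nonneg (hp ω).le (le_max_right _ _)
          simp [hz, h1, h2]
      have step : F η ≤ η - (1/α) * (Sv + (η - v) * Pv) := by
        have := mul_le_mul_of_nonneg_left key hαpos.le
        simp only [hF]; linarith
      have h4 : (η - v) - (1/α) * ((η - v) * Pv) ≤ 0 := by
        have h2 : (1/α) * ((η - v) * (α - Pv)) ≤ 0 :=
          mul_nonpos_of_nonneg_of_nonpos hαpos.le
            (mul_nonpos_of_nonpos_of_nonneg (by linarith) (by linarith))
        have h3 : (1/α) * ((η - v) * (α - Pv)) = (η - v) - (1/α) * ((η - v) * Pv) := by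
          field_simp
        linarith [h3 ▸ h2]
      have : F (v:ℝ) = (v:ℝ) - (1/α) * Sv := rfl
      rw [this]; have := step; linarith
    · -- v ≤ η, use slope with Qv
      have key : Sv + (η - v) * Qv ≤ ∑ ω, p ω * max (η - (Z ω : ℝ)) 0 := by
        have hind : (η - v) * Qv
            = ∑ ω, (if Z ω ≤ v then (η - v) * p ω else 0) := by
          rw [hQv, Finset.mul_sum, Finset.sum_filter]
        rw [hSv, hind, ← Finset.sum_add_distrib]
        apply Finset.sum_le_sum
        intro ω _
        by_cases hz : Z ω ≤ v
        · have hzv : (Z ω : ℝ) ≤ (v:ℝ) := by exact_mod_cast hz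
          have h1 : max ((v:ℝ) - Z ω) 0 = (v:ℝ) - Z ω := max_eq_left (by linarith)
          have h2 : η - (Z ω : ℝ) ≤ max (η - Z ω) 0 := le_max_left _ _
          have hp' := (hp ω).le
          simp only [hz, if_true, h1]
          nlinarith [mul_le_mul_of_nonneg_left h2 hp']
        · have hzv : (v:ℝ) ≤ (Z ω : ℝ) := by
            exact_mod_cast (Nat.le_of_not_lt (by omega))
          have h1 : max ((v:ℝ) - Z ω) 0 = 0 := max_eq_right (by linarith)
          have h2 : (0:ℝ) ≤ p ω * max (η - Z ω) 0 :=
            mul_nonneg (hp ω).le (le_max_right _ _)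
          simp [hz, h1, h2]
      have step : F η ≤ η - (1/α) * (Sv + (η - v) * Qv) := by
        have := mul_le_mul_of_nonneg_left key hαpos.le
        simp only [hF]; linarith
      have h4 : (η - v) - (1/α) * ((η - v) * Qv) ≤ 0 := by
        have h2 : (1/α) * ((η - v) * (α - Qv)) ≤ 0 :=
          mul_nonpos_of_nonneg_of_nonpos hαpos.le
            (mul_nonpos_of_nonneg_of_nonpos (by linarith) (by linarith [hv]))
        have h3 : (1/α) * ((η - v) * (α - Qv)) = (η - v) - (1/α) * ((η - v) * Qv) := by
          field_simp
        linarith [h3 ▸ h2]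
      have : F (v:ℝ) = (v:ℝ) - (1/α) * Sv := rfl
      rw [this]; linarith
  have hsup : (⨆ η : ℝ, F η) = F (v:ℝ) := by
    apply le_antisymm
    · exact ciSup_le hle
    · exact le_ciSup ⟨F (v:ℝ), by rintro x ⟨η, rfl⟩; exact hle η⟩ (v:ℝ)
  -- compute F v
  have hcomp : Sv = (v:ℝ) * Pv - ∑ k ∈ Finset.range v,
      (k : ℝ) * ∑ ω ∈ Finset.univ.filter (fun ω => Z ω = k), p ω := by
    have h1 : Sv = ∑ ω ∈ Finset.univ.filter (fun ω => Z ω < v),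
        (p ω * ((v:ℝ) - (Z ω : ℝ))) := by
      rw [hSv, Finset.sum_filter]
      apply Finset.sum_congr rfl
      intro ω _
      by_cases hz : Z ω < v
      · have hzv : (Z ω : ℝ) ≤ (v:ℝ) := by exact_mod_cast hz.le
        rw [max_eq_left (by linarith)]; simp [hz]
      · have hzv : (v:ℝ) ≤ (Z ω : ℝ) := by exact_mod_cast (Nat.le_of_not_lt hz)
        rw [max_eq_right (by linarith)]; simp [hz]
    have h2 : ∑ k ∈ Finset.range v,
        (k : ℝ) * ∑ ω ∈ Finset.univ.filter (fun ω => Z ω = k), p ω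
        = ∑ ω ∈ Finset.univ.filter (fun ω => Z ω < v), p ω * (Z ω : ℝ) := by
      have h3 : ∀ k ∈ Finset.range v,
          (k : ℝ) * ∑ ω ∈ Finset.univ.filter (fun ω => Z ω = k), p ω
          = ∑ ω ∈ Finset.univ.filter (fun ω => Z ω = k), p ω * (Z ω : ℝ) := by
        intro k _
        rw [Finset.mul_sum]
        apply Finset.sum_congr rfl
        intro ω hω
        have := (Finset.mem_filter.1 hω).2
        rw [this]; ring
      rw [Finset.sum_congr rfl h3,
        Finset.sum_fiberwise_eq_sum_filter Finset.univ (Finset.range v) Z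
          (fun ω => p ω * (Z ω : ℝ))]
      apply Finset.sum_congr _ (fun _ _ => rfl)
      apply Finset.filter_congr; intro ω _; simp
    rw [h1, h2, hPv, Finset.mul_sum, ← Finset.sum_sub_distrib]
    apply Finset.sum_congr rfl
    intro ω _; ring
  show (⨆ η : ℝ, F η) = _
  rw [hsup]
  show (v:ℝ) - (1/α) * Sv = _
  rw [hcomp]; ring
end
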